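/- arXiv:1910.08933 — 2 statements merged into one kernel-verified Lean document; each statement's English description precedes it below -/
import Mathlib

section
/- Suppose X has density f with all moments finite, f is differentiable on [x0, ∞) for some x0 > 1, and the function L(x) = -x f'(x)/f(x) has a limit ℓ (in [0, ∞]) as x → ∞. Then ℓ = ∞. -/
open Filter Set MeasureTheory

/-! If `ℓ < ∞`, then `L(x) = -x f'(x) / f(x)` stays below some integer `n` on a half-line
`[a, ∞)`, so `(x ^ n f(x))' = x ^ (n - 1) (n f(x) + x f'(x)) ≥ 0` there. Hence
`x ^ n f(x)` is bounded below by the positive constant `a ^ n f(a)` and the `n`-th absolute moment diverges. -/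

theorem EReal.exists_nat_eventually_lt_of_tendsto {α : Type*} {l : Filter α} {u : α → EReal}
    {ℓ : EReal} (hu : Tendsto u l (nhds ℓ)) (hℓ : ℓ ≠ ⊤) : ∃ n : ℕ, ∀ᶠ x in l, u x < n := by
  obtain ⟨y, hℓy, -⟩ := EReal.exists_between_coe_real (lt_top_iff_ne_top.2 hℓ)
  obtain ⟨n, hyn⟩ := exists_nat_ge y
  exact ⟨n, hu.eventually (Iio_mem_nhds (hℓy.trans_le (mod_cast hyn)))⟩

theorem monotoneOn_pow_mul_of_neg_mul_deriv_le {f : ℝ → ℝ} {a : ℝ} (n : ℕ) (ha : 0 < a)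
    (hdiff : ∀ x ∈ Ici a, DifferentiableAt ℝ f x)
    (hL : ∀ x ∈ Ioi a, -(x * deriv f x) ≤ n * f x) :
    MonotoneOn (fun x => x ^ n * f x) (Ici a) := by
  have hderiv : ∀ x ∈ Ici a, HasDerivAt (fun y => y ^ n * f y)
      (n * x ^ (n - 1) * f x + x ^ n * deriv f x) x :=
    fun x hx => (hasDerivAt_pow n x).fun_mul (hdiff x hx).hasDerivAt
  refine monotoneOn_of_deriv_nonneg (convex_Ici a)
    (fun x hx => (hderiv x hx).continuousAt.continuousWithinAt)
    (fun x hx => (hderiv x (interior_subset hx)).differentiableAt.differentiableWithinAt)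
    fun x hx => ?_
  rw [interior_Ici] at hx
  have hx0 : 0 < x := ha.trans hx
  rw [(hderiv x (Ioi_subset_Ici_self hx)).deriv]
  -- multiplying by `x > 0` removes the truncated exponent `n - 1`
  have hmul : x * (n * x ^ (n - 1) * f x + x ^ n * deriv f x)
      = x ^ n * (n * f x + x * deriv f x) := by
    rcases n with _ | n
    · simp
    · simp only [Nat.add_sub_cancel, pow_succ]; push_cast; ring
  have hprod := mul_nonneg (pow_pos hx0 n).le (neg_le_iff_add_nonneg.1 (hL x hx))
  exact nonneg_of_mul_nonneg_right (hmul ▸ hprod) hx0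

theorem not_integrableOn_Ici_of_forall_le {g : ℝ → ℝ} {a C : ℝ} (hC : 0 < C)
    (hg : ∀ x ∈ Ici a, C ≤ g x) : ¬ IntegrableOn g (Ici a) := by
  intro hint
  have hconst : IntegrableOn (fun _ => C) (Ici a) :=
    hint.mono' aestronglyMeasurable_const <| (ae_restrict_iff' measurableSet_Ici).2 <|
      ae_of_all _ fun x hx => by rw [Real.norm_eq_abs, abs_of_pos hC]; exact hg x hx
  simp [hC.ne', Real.volume_Ici] at hconst

theorem stmt_10_general (f : ℝ → ℝ) (x0 : ℝ) (hx0 : 1 < x0)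
    (hmom : ∀ k : ℕ, Integrable (fun x => |x| ^ k * f x))
    (hdiff : ∀ x, x0 ≤ x → DifferentiableAt ℝ f x)
    (hpos : ∀ x, x0 ≤ x → 0 < f x)
    (ℓ : EReal)
    (hlim : Tendsto (fun x => ((-x * deriv f x / f x : ℝ) : EReal)) atTop (nhds ℓ)) :
    ℓ = ⊤ := by
  by_contra hℓ
  obtain ⟨n, hn⟩ := EReal.exists_nat_eventually_lt_of_tendsto hlim hℓ
  obtain ⟨b, hb⟩ := eventually_atTop.1 hn
  set a := max x0 b
  have ha : 0 < a := by linarith [le_max_left x0 b]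
  have hfa : ∀ x ∈ Ici a, 0 < f x := fun x hx => hpos x (le_of_max_le_left hx)
  have hmono : MonotoneOn (fun x => x ^ n * f x) (Ici a) := by
    refine monotoneOn_pow_mul_of_neg_mul_deriv_le n ha
      (fun x hx => hdiff x (le_of_max_le_left hx)) fun x hx => ?_
    have hLx : -x * deriv f x / f x < n := mod_cast hb x (le_of_max_le_right hx.le)
    linarith [(div_lt_iff₀ (hfa x (Ioi_subset_Ici_self hx))).1 hLx]
  refine not_integrableOn_Ici_of_forall_le (a := a)
    (mul_pos (pow_pos ha n) (hfa a self_mem_Ici))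
    (fun x (hx : a ≤ x) => ?_) (hmom n).integrableOn
  rw [abs_of_pos (ha.trans_le hx)]
  exact hmono self_mem_Ici hx hx

/-- Lemma 1(i): if all moments of a density f are finite, f is
differentiable and positive on [x0,∞), and L(x) = -x f'(x)/f(x) has a limit ℓ
in the extended reals as x → ∞, then ℓ = ∞. -/
theorem stmt_10 (f : ℝ → ℝ) (x0 : ℝ) (hx0 : 1 < x0)
    (hnn : ∀ x, 0 ≤ f x)
    (hdens : ∫ x, f x = 1)
    (hint : Integrable f)
    (hmom : ∀ k : ℕ, Integrable (fun x => |x| ^ k * f x))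
    (hdiff : ∀ x, x0 ≤ x → DifferentiableAt ℝ f x)
    (hpos : ∀ x, x0 ≤ x → 0 < f x)
    (ℓ : EReal)
    (hlim : Tendsto (fun x => ((-x * deriv f x / f x : ℝ) : EReal)) atTop (nhds ℓ)) :
    ℓ = ⊤ :=
  stmt_10_general f x0 hx0 hmom hdiff hpos ℓ hlim
end

section
/- For the density f(x) = c·exp(-|x|/(ln|x|)^α) on ℝ (with α ∈ (0,1], f(0)=0, c a normalizing constant), the integral ∫_{10}^∞ (-ln f(x))/(x² ln x) dx is finite, while ∫_{10}^∞ (-ln f(x))/(1+x²) dx is infinite. -/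
/-!
On `[10, ∞)` we have `-log f x = x / (log x)^α - log c`. Against the weight `1 / (x² log x)` this is
dominated by `x⁻¹ (log x)^(-α-1)` plus a multiple of `x⁻²`, both integrable at infinity (the first
by the substitution `y = log x`, which turns it into `y^(-α-1)`). Against `1 / (1 + x²)` it is
eventually at least `1 / (4 x log x)` because `α ≤ 1`, and `1 / (x log x)` is not integrable at
infinity by the same substitution, which turns it into `y⁻¹`.
-/

open Filter Set MeasureTheory Real

theorem integrableOn_Ioi_inv_mul_log_rpow_iff {a s : ℝ} (ha : 1 < a) :
    IntegrableOn (fun x ↦ x⁻¹ * log x ^ s) (Ioi a) ↔ s < -1 := by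
  rw [← integrableOn_Ioi_rpow_iff (log_pos ha)]
  exact integrableOn_comp_log_Ioi (· ^ s) (by linarith)

theorem setLIntegral_ofReal_eq_top_of_not_integrableOn {X : Type*} [MeasurableSpace X]
    {μ : Measure X} {f : X → ℝ} {s : Set X} (hs : MeasurableSet s)
    (hf : AEStronglyMeasurable f (μ.restrict s)) (hf₀ : ∀ x ∈ s, 0 ≤ f x)
    (hfi : ¬ IntegrableOn f s μ) : ∫⁻ x in s, ENNReal.ofReal (f x) ∂μ = ⊤ := by
  by_contra h
  refine hfi ⟨hf, (hasFiniteIntegral_iff_ofReal ?_).2 (lt_top_iff_ne_top.2 h)⟩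
  filter_upwards [ae_restrict_mem hs] with x hx using hf₀ x hx

theorem lintegral_Ioi_ofReal_div_mul_log_eq_top {a C : ℝ} (ha : 1 < a) (hC : 0 < C) :
    ∫⁻ x in Ioi a, ENNReal.ofReal (C / (x * log x)) = ⊤ := by
  refine setLIntegral_ofReal_eq_top_of_not_integrableOn measurableSet_Ioi
    (measurable_const.div (measurable_id.mul measurable_log)).aestronglyMeasurable
    (fun x hx ↦ ?_) fun h ↦ ?_
  · have : 0 < log x := log_pos (ha.trans hx)
    have : 0 < x := by linarith [mem_Ioi.1 hx]
    positivity
  · have : IntegrableOn (fun x ↦ x⁻¹ * log x ^ (-1 : ℝ)) (Ioi a) := by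
      refine ((integrable_const_mul_iff (isUnit_iff_ne_zero.2 hC.ne') _).1 ?_)
      refine h.congr_fun (fun x _ ↦ ?_) measurableSet_Ioi
      simp only [rpow_neg_one]
      field_simp
    exact lt_irrefl _ ((integrableOn_Ioi_inv_mul_log_rpow_iff ha).1 this)

theorem setLIntegral_Ici_ofReal_eq_top_of_eventually_le {f g : ℝ → ℝ} (a : ℝ)
    (hg : ∀ᶠ b in atTop, ∫⁻ x in Ioi b, ENNReal.ofReal (g x) = ⊤)
    (hgf : ∀ᶠ x in atTop, g x ≤ f x) :
    ∫⁻ x in Ici a, ENNReal.ofReal (f x) = ⊤ := by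
  obtain ⟨M, hM⟩ := eventually_atTop.1 hgf
  obtain ⟨b, hb, hab, hMb⟩ :=
    (hg.and ((eventually_ge_atTop a).and (eventually_ge_atTop M))).exists
  rw [eq_top_iff, ← hb]
  calc ∫⁻ x in Ioi b, ENNReal.ofReal (g x)
      ≤ ∫⁻ x in Ioi b, ENNReal.ofReal (f x) :=
        setLIntegral_mono' measurableSet_Ioi fun x hx ↦
          ENNReal.ofReal_le_ofReal (hM x (hMb.trans (le_of_lt hx)))
    _ ≤ ∫⁻ x in Ici a, ENNReal.ofReal (f x) := lintegral_mono_set (Ioi_subset_Ici hab)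

/-- `-log f x` for `x > 1`, with `b = -log c`. -/
noncomputable def negLogDensity (α b x : ℝ) : ℝ := x / log x ^ α + b

theorem lintegral_negLogDensity_div_sq_mul_log_ne_top {α a : ℝ} (b : ℝ) (hα : 0 < α)
    (ha : 1 < a) :
    ∫⁻ x in Ici a, ENNReal.ofReal (negLogDensity α b x / (x ^ 2 * log x)) ≠ ⊤ := by
  have hh : IntegrableOn (fun x ↦ x⁻¹ * log x ^ (-α - 1) + |b| / log a * x ^ (-2 : ℝ))
      (Ici a) := (integrableOn_Ici_iff_integrableOn_Ioi).2 <|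
    ((integrableOn_Ioi_inv_mul_log_rpow_iff ha).2 (by linarith)).add
      ((integrableOn_Ioi_rpow_of_lt (by norm_num) (by linarith)).const_mul _)
  refine ne_top_of_le_ne_top hh.lintegral_lt_top.ne <|
    setLIntegral_mono' measurableSet_Ici fun x hx ↦ ENNReal.ofReal_le_ofReal ?_
  have hx0 : 0 < x := by linarith [mem_Ici.1 hx]
  have hLa : 0 < log a := log_pos ha
  have hL : log a ≤ log x := log_le_log (by linarith) hx
  have hL0 : 0 < log x := hLa.trans_le hL
  calc negLogDensity α b x / (x ^ 2 * log x)
      = x⁻¹ * log x ^ (-α - 1) + b / (x ^ 2 * log x) := by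
        rw [negLogDensity, rpow_sub hL0, rpow_neg hL0.le, rpow_one]
        field_simp
    _ ≤ x⁻¹ * log x ^ (-α - 1) + |b| / log a * x ^ (-2 : ℝ) := by
        have hb : b / (x ^ 2 * log x) ≤ |b| / (x ^ 2 * log a) :=
          div_le_div₀ (abs_nonneg b) (le_abs_self b) (by positivity) (by gcongr)
        rw [rpow_neg hx0.le, rpow_two]
        linarith [show |b| / log a * (x ^ 2)⁻¹ = |b| / (x ^ 2 * log a) by ring]

theorem eventually_div_mul_log_le_negLogDensity_div_one_add_sq {α : ℝ} (b : ℝ) (hα : α ≤ 1) :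
    ∀ᶠ x in atTop, 1 / 4 / (x * log x) ≤ negLogDensity α b x / (1 + x ^ 2) := by
  have hlog : ∀ᶠ x in atTop, (2 * |b| + 1) * log x ≤ x := by
    filter_upwards [isLittleO_log_id_atTop.bound (c := (2 * |b| + 1)⁻¹) (by positivity),
      eventually_ge_atTop 1] with x hx hx1
    rw [norm_of_nonneg (log_nonneg hx1), id, norm_of_nonneg (by linarith)] at hx
    rwa [← le_div_iff₀' (by positivity), div_eq_inv_mul]
  filter_upwards [hlog, eventually_ge_atTop (exp 1)] with x hx hxe
  have hx0 : 0 < x := (exp_pos 1).trans_le hxe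
  have hx1 : 1 ≤ x := by linarith [add_one_le_exp 1]
  have hL1 : 1 ≤ log x := (le_log_iff_exp_le hx0).2 hxe
  have hL0 : 0 < log x := by linarith
  have hLα : log x ^ α ≤ log x := rpow_le_self_of_one_le hL1 hα
  have hnum : x / (2 * log x) ≤ negLogDensity α b x := by
    have h1 : x / log x ≤ x / log x ^ α := div_le_div_of_nonneg_left hx0.le (by positivity) hLα
    have h2 : -b ≤ x / (2 * log x) := by
      rw [le_div_iff₀ (by positivity)]
      nlinarith [neg_le_abs b, abs_nonneg b]
    have h3 : x / log x = x / (2 * log x) + x / (2 * log x) := by field_simp; ring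
    rw [negLogDensity]
    linarith
  have hnum₀ : 0 ≤ negLogDensity α b x := (by positivity : (0 : ℝ) ≤ x / (2 * log x)).trans hnum
  calc 1 / 4 / (x * log x) = x / (2 * log x) / (2 * x ^ 2) := by field_simp; ring
    _ ≤ negLogDensity α b x / (1 + x ^ 2) :=
        div_le_div₀ hnum₀ hnum (by positivity) (by nlinarith)

theorem lintegral_negLogDensity_div_one_add_sq_eq_top {α : ℝ} (a b : ℝ) (hα : α ≤ 1) :
    ∫⁻ x in Ici a, ENNReal.ofReal (negLogDensity α b x / (1 + x ^ 2)) = ⊤ :=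
  setLIntegral_Ici_ofReal_eq_top_of_eventually_le a
    ((eventually_gt_atTop 1).mono fun _ hb ↦
      lintegral_Ioi_ofReal_div_mul_log_eq_top hb (by norm_num))
    (eventually_div_mul_log_le_negLogDensity_div_one_add_sq b hα)

theorem stmt_16_general (α c : ℝ) (hα : α ∈ Set.Ioc (0 : ℝ) 1) (hc : 0 < c)
    (f : ℝ → ℝ)
    (hf : ∀ x : ℝ, x ≠ 0 → f x = c * Real.exp (-(|x| / Real.log |x| ^ α))) :
    (∫⁻ x in Set.Ici (10 : ℝ),
        ENNReal.ofReal (-Real.log (f x) / (x ^ 2 * Real.log x)) ≠ ⊤) ∧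
    (∫⁻ x in Set.Ici (10 : ℝ),
        ENNReal.ofReal (-Real.log (f x) / (1 + x ^ 2)) = ⊤) := by
  have hlog : ∀ x ∈ Ici (10 : ℝ), -log (f x) = negLogDensity α (-log c) x := by
    intro x hx
    have hx0 : 0 < x := by linarith [mem_Ici.1 hx]
    rw [hf x hx0.ne', log_mul hc.ne' (exp_ne_zero _), log_exp, abs_of_pos hx0, negLogDensity]
    ring
  constructor
  · rw [setLIntegral_congr_fun measurableSet_Ici fun x hx ↦ by rw [hlog x hx]]
    exact lintegral_negLogDensity_div_sq_mul_log_ne_top _ hα.1 (by norm_num)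
  · rw [setLIntegral_congr_fun measurableSet_Ici fun x hx ↦ by rw [hlog x hx]]
    exact lintegral_negLogDensity_div_one_add_sq_eq_top _ _ hα.2

/-- Example 1: for the density f(x) = c·exp(-|x|/(ln|x|)^α),
α ∈ (0,1], the integral K_*[f] over [10,∞) is finite while the Krein-type
integral K[f] over [10,∞) is infinite. -/
theorem stmt_16 (α c : ℝ) (hα : α ∈ Set.Ioc (0 : ℝ) 1) (hc : 0 < c)
    (f : ℝ → ℝ)
    (hf : ∀ x : ℝ, x ≠ 0 → f x = c * Real.exp (-(|x| / Real.log |x| ^ α)))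
    (hf0 : f 0 = 0) :
    (∫⁻ x in Set.Ici (10 : ℝ),
        ENNReal.ofReal (-Real.log (f x) / (x ^ 2 * Real.log x)) ≠ ⊤) ∧
    (∫⁻ x in Set.Ici (10 : ℝ),
        ENNReal.ofReal (-Real.log (f x) / (1 + x ^ 2)) = ⊤) :=
  stmt_16_general α c hα hc f hf
end
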